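/- For N balls thrown independently and uniformly into M boxes and two disjoint sets S, T of boxes, the events 'every box in S is occupied' and 'every box in T is occupied' are negatively correlated: P(both) ≤ P(every box in S occupied) · P(every box in T occupied). -/

import Mathlib

/-!
Throw the balls one at a time and track the set `A` of occupied boxes. If `f` and `g` are
monotone in `A` and depend only on `A ∩ S` and `A ∩ T` respectively, then a new ball can raise
at most one of them, so `x ↦ f (insert x A)` and `x ↦ g (insert x A)` antivary and Chebyshev's
sum inequality controls the last ball. Averaging `f` and `g` over the last ball gives functions
of the same kind, so induction on the number of balls yields negative correlation; the events
"all of `S` occupied" and "all of `T` occupied" are the indicator case.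
-/

open MeasureTheory Finset

/-- `N` balls thrown independently and uniformly into `M` boxes. -/
noncomputable def ballsMeasure (N M : ℕ) [NeZero M] : Measure (Fin N → Fin M) :=
  (PMF.uniformOfFintype (Fin N → Fin M)).toMeasure

variable {α : Type*} [DecidableEq α]

def occupied {N : ℕ} (ω : Fin N → α) : Finset α := univ.image ω

lemma subset_occupied_iff {N : ℕ} {S : Finset α} {ω : Fin N → α} :
    S ⊆ occupied ω ↔ ∀ s ∈ S, ∃ i, ω i = s := by
  simp [occupied, subset_iff]

lemma occupied_cons {N : ℕ} (x : α) (ω : Fin N → α) :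
    occupied (Fin.cons x ω : Fin (N + 1) → α) = insert x (occupied ω) := by
  ext y; simp [occupied, Fin.exists_fin_succ, eq_comm]

lemma sum_occupied_succ [Fintype α] {N : ℕ} (h : Finset α → ℝ) :
    ∑ ω : Fin (N + 1) → α, h (occupied ω) = ∑ ω : Fin N → α, ∑ x, h (insert x (occupied ω)) := by
  rw [← (Fin.consEquiv fun _ => α).sum_comp, Fintype.sum_prod_type_right]
  exact sum_congr rfl fun ω _ => sum_congr rfl fun x _ => congrArg h (occupied_cons x ω)

section Correlation

variable {S T : Finset α} {f g : Finset α → ℝ}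

lemma apply_insert_of_notMem (hfS : ∀ A, f (A ∩ S) = f A) {x : α} (hx : x ∉ S) (A : Finset α) :
    f (insert x A) = f A := by
  rw [← hfS, insert_inter_of_notMem hx, hfS]

lemma antivary_apply_insert (hST : Disjoint S T) (hf : Monotone f) (hg : Monotone g)
    (hfS : ∀ A, f (A ∩ S) = f A) (hgT : ∀ A, g (A ∩ T) = g A) (A : Finset α) :
    Antivary (fun x => f (insert x A)) (fun x => g (insert x A)) := by
  intro i j hij
  have hjT : j ∈ T := by
    by_contra hj
    exact hij.not_ge (by simpa only [apply_insert_of_notMem hgT hj] using hg (subset_insert i A))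
  simp only [apply_insert_of_notMem hfS (disjoint_right.mp hST hjT)]
  exact hf (subset_insert i A)

lemma apply_insert_inter (hfS : ∀ A, f (A ∩ S) = f A) (x : α) (A : Finset α) :
    f (insert x (A ∩ S)) = f (insert x A) := by
  rw [← hfS, ← hfS (insert x A)]
  congr 1
  ext y
  simp only [mem_inter, mem_insert]
  tauto

variable [Fintype α]

lemma card_pow_mul_sum_mul_le_sum_mul_sum (hST : Disjoint S T) (hf : Monotone f)
    (hg : Monotone g) (hfS : ∀ A, f (A ∩ S) = f A) (hgT : ∀ A, g (A ∩ T) = g A) (N : ℕ) :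
    (Fintype.card α : ℝ) ^ N * ∑ ω : Fin N → α, f (occupied ω) * g (occupied ω) ≤
      (∑ ω : Fin N → α, f (occupied ω)) * ∑ ω : Fin N → α, g (occupied ω) := by
  induction N generalizing f g with
  | zero => simp
  | succ N ih =>
    have hF : Monotone fun A => ∑ x, f (insert x A) := fun A B hAB =>
      sum_le_sum fun x _ => hf (insert_subset_insert x hAB)
    have hG : Monotone fun A => ∑ x, g (insert x A) := fun A B hAB =>
      sum_le_sum fun x _ => hg (insert_subset_insert x hAB)
    calc (Fintype.card α : ℝ) ^ (N + 1) * ∑ ω : Fin (N + 1) → α, f (occupied ω) * g (occupied ω)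
        = (Fintype.card α : ℝ) ^ N * ∑ ω : Fin N → α,
            Fintype.card α * ∑ x, f (insert x (occupied ω)) * g (insert x (occupied ω)) := by
          rw [sum_occupied_succ fun A => f A * g A, ← mul_sum, pow_succ, mul_assoc]
      _ ≤ (Fintype.card α : ℝ) ^ N * ∑ ω : Fin N → α,
            (∑ x, f (insert x (occupied ω))) * ∑ x, g (insert x (occupied ω)) := by
          refine mul_le_mul_of_nonneg_left (sum_le_sum fun ω _ => ?_) (by positivity)
          exact (antivary_apply_insert hST hf hg hfS hgT _).card_mul_sum_le_sum_mul_sum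
      _ ≤ _ := ih hF hG (fun A => sum_congr rfl fun x _ => apply_insert_inter hfS x A)
            (fun A => sum_congr rfl fun x _ => apply_insert_inter hgT x A)
      _ = _ := by rw [sum_occupied_succ f, sum_occupied_succ g]

lemma card_pow_mul_card_filter_le (hST : Disjoint S T) (N : ℕ) :
    Fintype.card α ^ N * #{ω : Fin N → α | S ⊆ occupied ω ∧ T ⊆ occupied ω} ≤
      #{ω : Fin N → α | S ⊆ occupied ω} * #{ω : Fin N → α | T ⊆ occupied ω} := by
  have hmono (U : Finset α) : Monotone fun A : Finset α => if U ⊆ A then (1 : ℝ) else 0 :=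
    fun A B hAB => by grind
  have hinter (U A : Finset α) : (if U ⊆ A ∩ U then (1 : ℝ) else 0) = if U ⊆ A then 1 else 0 := by
    simp [subset_inter_iff]
  have key := card_pow_mul_sum_mul_le_sum_mul_sum hST (hmono S) (hmono T) (hinter S) (hinter T) N
  simp only [ite_zero_mul_ite_zero, one_mul, sum_boole] at key
  exact_mod_cast key

end Correlation

lemma ballsMeasure_coe_finset {N M : ℕ} [NeZero M] (s : Finset (Fin N → Fin M)) :
    ballsMeasure N M s = #s / (M ^ N : ℕ) := by
  rw [ballsMeasure, PMF.toMeasure_uniformOfFintype_apply _ s.measurableSet]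
  simp

lemma ENNReal.natCast_div_le_div_mul_div {a b c n : ℕ} (hn : n ≠ 0) (h : n * a ≤ b * c) :
    (a : ENNReal) / n ≤ b / n * (c / n) := by
  rw [← ENNReal.mul_div_mul_comm (by simp [hn]) (by simp),
    ← ENNReal.mul_div_mul_left (a : ENNReal) n (c := n) (by simp [hn]) (by simp)]
  exact ENNReal.div_le_div_right (by exact_mod_cast h) _

theorem stmt17_general (N M : ℕ) [NeZero M]
    (S T : Finset (Fin M)) (hST : Disjoint S T) :
    ballsMeasure N M
        ({ω | ∀ s ∈ S, ∃ i, ω i = s} ∩ {ω | ∀ t ∈ T, ∃ i, ω i = t}) ≤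
      ballsMeasure N M {ω | ∀ s ∈ S, ∃ i, ω i = s} *
        ballsMeasure N M {ω | ∀ t ∈ T, ∃ i, ω i = t} := by
  have hevent (U : Finset (Fin M)) :
      {ω : Fin N → Fin M | ∀ u ∈ U, ∃ i, ω i = u} =
        (({ω | U ⊆ occupied ω} : Finset (Fin N → Fin M)) : Set (Fin N → Fin M)) := by
    ext ω; simp [subset_occupied_iff]
  rw [hevent S, hevent T, ← coe_inter, ← filter_and, ballsMeasure_coe_finset,
    ballsMeasure_coe_finset, ballsMeasure_coe_finset]
  apply ENNReal.natCast_div_le_div_mul_div (pow_ne_zero N (NeZero.ne M))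
  simpa using card_pow_mul_card_filter_le hST N

theorem stmt17 (N M : ℕ) (hN : 1 ≤ N) [NeZero M]
    (S T : Finset (Fin M)) (hST : Disjoint S T) :
    ballsMeasure N M
        ({ω | ∀ s ∈ S, ∃ i, ω i = s} ∩ {ω | ∀ t ∈ T, ∃ i, ω i = t}) ≤
      ballsMeasure N M {ω | ∀ s ∈ S, ∃ i, ω i = s} *
        ballsMeasure N M {ω | ∀ t ∈ T, ∃ i, ω i = t} :=
  stmt17_general N M S T hST
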